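/- Let x > 0 and s > 1 be real numbers. Then ∑_{b=1}^{∞} (x)_{(b)} / (x+s)_{(b)} converges and equals x/(s−1). Equivalently, if X has the Beta(x, s) distribution, then ∑_{b≥1} E[X^b] = E[X/(1−X)] = x/(s−1). -/

import Mathlib

open MeasureTheory Finset

/-- Rising factorial `(x)_{(n)} = ∏_{j=0}^{n-1} (x+j)`. -/
noncomputable def risingFactorial (x : ℝ) (n : ℕ) : ℝ := ∏ j ∈ Finset.range n, (x + j)

/-- Beta function `B(a,b) = Γ(a)Γ(b)/Γ(a+b)`. -/
noncomputable def betaFn (a b : ℝ) : ℝ := Real.Gamma a * Real.Gamma b / Real.Gamma (a + b)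

/-- The partition of `{1,…,n}` induced by an allocation vector `z ∈ (ℕ₊)ⁿ`:
its blocks are the nonempty level sets `{i : z_i = j}`. -/
def Cz {n : ℕ} (z : Fin n → ℕ+) : Finset (Finset (Fin n)) :=
  Finset.image (fun i => Finset.univ.filter fun i' => z i' = z i) Finset.univ

/-- `m(z) = max {z₁,…,zₙ}`. -/
def mz {n : ℕ} (z : Fin n → ℕ+) : ℕ := Finset.univ.sup fun i => (z i : ℕ)

/-- `g_j(z) = #{i : z_i ≥ j}`. -/
def gz {n : ℕ} (z : Fin n → ℕ+) (j : ℕ) : ℕ :=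
  (Finset.univ.filter fun i => j ≤ (z i : ℕ)).card

/-- Access the `j`-th coordinate (1-indexed) of a vector `v : Fin m → ℝ`. -/
noncomputable def stk {m : ℕ} (v : Fin m → ℝ) (j : ℕ) : ℝ :=
  if h : j - 1 < m then v ⟨j - 1, h⟩ else 0

/-- `C` is a partition of `{1,…,n}`: all blocks are nonempty and every element
belongs to exactly one block. -/
def IsPartition {n : ℕ} (C : Finset (Finset (Fin n))) : Prop :=
  (∀ c ∈ C, c.Nonempty) ∧ ∀ i : Fin n, ∃! c, c ∈ C ∧ i ∈ c

/-!
Writing `u b = (x)_{(b+1)} / ((s-1) (x+s)_{(b)})`, one checks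
`u b - u (b+1) = (x)_{(b+1)} / (x+s)_{(b+1)} = (s-1)/(x+s+b) · u b`,
so the series telescopes to `u 0 - lim u = x/(s-1) - lim u`. The limit vanishes because `u` shrinks
at each step by the factor `1 - (s-1)/(x+s+b)`, whose deficits form a divergent harmonic-type series.
-/

open Filter Topology

theorem hasSum_sub_succ_of_antitone {f : ℕ → ℝ} {l : ℝ} (hf : Antitone f)
    (hl : Tendsto f atTop (𝓝 l)) : HasSum (fun n => f n - f (n + 1)) (f 0 - l) := by
  rw [hasSum_iff_tendsto_nat_of_nonneg fun n => sub_nonneg.2 (hf n.le_succ)]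
  simp_rw [Finset.sum_range_sub']
  exact hl.const_sub (f 0)

theorem not_summable_div_add_natCast {c d : ℝ} (hc : c ≠ 0) (hd : 0 ≤ d) :
    ¬Summable fun n : ℕ => c / (d + n) := by
  have harmonic := (Real.summable_one_div_nat_add_rpow d 1).not.2 (lt_irrefl 1)
  contrapose! harmonic
  refine ((summable_mul_left_iff (inv_ne_zero hc)).2 harmonic).congr fun n => ?_
  rw [Real.rpow_one, abs_of_nonneg (by positivity), add_comm]
  field_simp

section Decay

variable {u a : ℕ → ℝ}

theorem antitone_of_sub_succ_eq_mul (hu : ∀ n, 0 ≤ u n) (ha : ∀ n, 0 ≤ a n)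
    (h : ∀ n, u n - u (n + 1) = a n * u n) : Antitone u :=
  antitone_nat_of_succ_le fun n => sub_nonneg.1 <| h n ▸ mul_nonneg (ha n) (hu n)

theorem tendsto_zero_of_sub_succ_eq_mul (hu : ∀ n, 0 ≤ u n) (ha : ∀ n, 0 ≤ a n)
    (ha_div : ¬Summable a) (h : ∀ n, u n - u (n + 1) = a n * u n) :
    Tendsto u atTop (𝓝 0) := by
  have hanti := antitone_of_sub_succ_eq_mul hu ha h
  have hbdd : BddBelow (Set.range u) := ⟨0, by rintro _ ⟨n, rfl⟩; exact hu n⟩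
  have hlim := tendsto_atTop_ciInf hanti hbdd
  set L := ⨅ n, u n
  suffices hL : L = 0 from hL ▸ hlim
  have hsum : Summable fun n => a n * u n :=
    (hasSum_sub_succ_of_antitone hanti hlim).summable.congr h
  -- `a n * L ≤ a n * u n`, so `L > 0` would make `a` summable
  by_contra hL
  have hL_pos : 0 < L := (le_ciInf hu).lt_of_ne' hL
  refine ha_div <| (summable_mul_right_iff hL_pos.ne').1 <|
    hsum.of_nonneg_of_le (fun n => mul_nonneg (ha n) hL_pos.le) fun n => ?_
  exact mul_le_mul_of_nonneg_left (ciInf_le hbdd n) (ha n)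

end Decay

theorem risingFactorial_zero (x : ℝ) : risingFactorial x 0 = 1 :=
  Finset.prod_range_zero _

theorem risingFactorial_succ (x : ℝ) (n : ℕ) :
    risingFactorial x (n + 1) = risingFactorial x n * (x + n) :=
  Finset.prod_range_succ _ _

theorem risingFactorial_pos {x : ℝ} (hx : 0 < x) (n : ℕ) : 0 < risingFactorial x n :=
  Finset.prod_pos fun _ _ => by positivity

-- the tail `∑_{c > b} (x)_{(c)} / (x+s)_{(c)}` in closed form
noncomputable def risingRatioTail (x s : ℝ) (b : ℕ) : ℝ :=
  risingFactorial x (b + 1) / ((s - 1) * risingFactorial (x + s) b)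

section RisingRatioTail

variable {x s : ℝ}

theorem risingRatioTail_zero : risingRatioTail x s 0 = x / (s - 1) := by
  simp [risingRatioTail, risingFactorial_succ, risingFactorial_zero]

theorem risingRatioTail_nonneg (hx : 0 < x) (hs : 1 < s) (b : ℕ) : 0 ≤ risingRatioTail x s b := by
  have := risingFactorial_pos hx (b + 1)
  have := risingFactorial_pos (x := x + s) (by linarith) b
  unfold risingRatioTail
  have : 0 < s - 1 := by linarith
  positivity

theorem risingRatioTail_sub_succ (hxs : 0 < x + s) (hs : s ≠ 1) (b : ℕ) :
    risingRatioTail x s b - risingRatioTail x s (b + 1) =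
      (s - 1) / (x + s + b) * risingRatioTail x s b := by
  have := (risingFactorial_pos hxs b).ne'
  have : x + s + b ≠ 0 := by positivity
  have : s - 1 ≠ 0 := sub_ne_zero.2 hs
  simp only [risingRatioTail, risingFactorial_succ _ (b + 1), risingFactorial_succ (x + s) b]
  push_cast
  field_simp
  ring

theorem risingFactorial_div_succ_eq (hxs : 0 < x + s) (hs : s ≠ 1) (b : ℕ) :
    risingFactorial x (b + 1) / risingFactorial (x + s) (b + 1) =
      (s - 1) / (x + s + b) * risingRatioTail x s b := by
  have := (risingFactorial_pos hxs b).ne'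
  have : x + s + b ≠ 0 := by positivity
  have : s - 1 ≠ 0 := sub_ne_zero.2 hs
  rw [risingRatioTail, risingFactorial_succ (x + s) b]
  field_simp

end RisingRatioTail

/-- For `x > 0` and `s > 1`,
`∑_{b=1}^∞ (x)_{(b)} / (x+s)_{(b)}` converges and equals `x/(s-1)`. -/
theorem sum_risingFactorial_ratio (x s : ℝ) (hx : 0 < x) (hs : 1 < s) :
    HasSum (fun b : ℕ+ => risingFactorial x (b : ℕ) / risingFactorial (x + s) (b : ℕ))
      (x / (s - 1)) := by
  have hxs : 0 < x + s := by linarith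
  have hu := risingRatioTail_nonneg hx hs
  have ha : ∀ b : ℕ, 0 ≤ (s - 1) / (x + s + b) := fun b => div_nonneg (by linarith) (by positivity)
  have hstep := risingRatioTail_sub_succ hxs hs.ne'
  have hlim := tendsto_zero_of_sub_succ_eq_mul hu ha
    (not_summable_div_add_natCast (by linarith) hxs.le) hstep
  have htele := hasSum_sub_succ_of_antitone (antitone_of_sub_succ_eq_mul hu ha hstep) hlim
  rw [sub_zero, risingRatioTail_zero] at htele
  rw [hasSum_pnat_iff_hasSum_succ (f := fun b => risingFactorial x b / risingFactorial (x + s) b)]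
  convert htele using 2 with b
  rw [hstep, risingFactorial_div_succ_eq hxs hs.ne']
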